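/- arXiv:1903.07040 — 7 statements merged into one kernel-verified Lean document; each statement's English description precedes it below -/
import Mathlib

section
/- Let M ≥ 1 be an integer, λ > 1 and 0 < ε < 1 with ε < λ−1 and λ(1−ε) > 1. Let S be an (M,λ,ε,W_N)-minimizing set of conjugacy classes in F_N. Then for any [u] ∈ S and any φ ∈ Out(F_N) with ‖φ(u)‖_A ≤ ‖u‖_A, we have φ([u]) ∈ S. -/
/-- Abstract model: `G` plays the role of `Out(F_N)` acting on the set `C` of
conjugacy classes, `len` is the cyclically reduced length `‖·‖_A`, and `W ⊆ G`
is the set of nontrivial Whitehead moves.  `S` is an `(M,λ,ε,W_N)`-minimizing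
set: classes of nontrivial elements, at most `M` of them, all in one orbit,
pairwise length ratios in `[1-ε,1+ε]`, and every Whitehead move `τ ∈ W` either
keeps an element of `S` inside `S` or stretches its length by at least `λ`. -/
def IsWMinimizingSet {G C : Type*} [Group G] [MulAction G C] (W : Set G)
    (len : C → ℕ) (M : ℕ) (lam eps : ℝ) (S : Finset C) : Prop :=
  (∀ u ∈ S, 0 < len u) ∧
  S.card ≤ M ∧
  (∀ u ∈ S, ∀ u' ∈ S, ∃ φ : G, φ • u = u') ∧
  (∀ u ∈ S, ∀ u' ∈ S,
      (1 - eps) * (len u : ℝ) ≤ (len u' : ℝ) ∧ (len u' : ℝ) ≤ (1 + eps) * (len u : ℝ)) ∧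
  (∀ u ∈ S, ∀ τ ∈ W, τ • u ∉ S → lam * (len u : ℝ) ≤ (len (τ • u) : ℝ))

/-!
Peak reduction joins `[u]` to `φ([u])` by Whitehead moves through classes no longer than `[u]`.
A move leaving `S` from `[v] ∈ S` would produce a class of length at least
`λ‖v‖ ≥ λ(1-ε)‖u‖ > ‖u‖`, so the whole chain stays in `S`.
-/

namespace IsWMinimizingSet

variable {G C : Type*} [Group G] [MulAction G C] {W : Set G} {len : C → ℕ} {M : ℕ}
  {lam eps : ℝ} {S : Finset C}

theorem smul_mem_of_len_le (hS : IsWMinimizingSet W len M lam eps S) (hlam : 0 ≤ lam)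
    (hle : 1 < lam * (1 - eps)) {u v : C} (hu : u ∈ S) (hv : v ∈ S) {τ : G} (hτ : τ ∈ W)
    (hτv : len (τ • v) ≤ len u) : τ • v ∈ S := by
  obtain ⟨hpos, -, -, hratio, hstretch⟩ := hS
  by_contra hτv_notMem
  have hu_pos : (0 : ℝ) < len u := by exact_mod_cast hpos u hu
  have hτv' : (len (τ • v) : ℝ) ≤ len u := by exact_mod_cast hτv
  refine lt_irrefl (len u : ℝ) ?_
  calc (len u : ℝ) < lam * (1 - eps) * len u := lt_mul_of_one_lt_left hu_pos hle
    _ = lam * ((1 - eps) * len u) := mul_assoc _ _ _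
    _ ≤ lam * len v := mul_le_mul_of_nonneg_left (hratio u hu v hv).1 hlam
    _ ≤ len (τ • v) := hstretch v hv τ hτ hτv_notMem
    _ ≤ len u := hτv'

theorem chain_mem (hS : IsWMinimizingSet W len M lam eps S) (hlam : 0 ≤ lam)
    (hle : 1 < lam * (1 - eps)) {u : C} (hu : u ∈ S) {k : ℕ} {c : ℕ → C} (hc0 : c 0 = u)
    (hstep : ∀ i < k, ∃ τ ∈ W, τ • c i = c (i + 1)) (hlen : ∀ i ≤ k, len (c i) ≤ len u) :
    ∀ i ≤ k, c i ∈ S := by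
  intro i
  induction i with
  | zero => exact fun _ => hc0 ▸ hu
  | succ i ih =>
    intro hi
    obtain ⟨τ, hτ, hτc⟩ := hstep i hi
    rw [← hτc]
    exact hS.smul_mem_of_len_le hlam hle hu (ih (Nat.le_of_succ_le hi)) hτ
      (hτc ▸ hlen (i + 1) hi)

end IsWMinimizingSet

theorem stmt1_general {G C : Type*} [Group G] [MulAction G C] (W : Set G)
    (len : C → ℕ) (M : ℕ) (lam eps : ℝ)
    (hlam : 1 < lam)
    (hle : 1 < lam * (1 - eps))
    (hpeak : ∀ (w : C) (φ : G), len (φ • w) ≤ len w →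
      ∃ (k : ℕ) (c : ℕ → C), c 0 = w ∧ c k = φ • w ∧
        (∀ i < k, ∃ τ ∈ W, τ • c i = c (i + 1)) ∧
        (∀ i ≤ k, len (c i) ≤ len w))
    (S : Finset C) (hS : IsWMinimizingSet W len M lam eps S)
    (u : C) (hu : u ∈ S) (φ : G) (hφ : len (φ • u) ≤ len u) :
    φ • u ∈ S := by
  obtain ⟨k, c, hc0, hck, hstep, hlen⟩ := hpeak u φ hφ
  exact hck ▸ hS.chain_mem (zero_le_one.trans hlam.le) hle hu hc0 hstep hlen k le_rfl

/-- if `S` is `(M,λ,ε,W_N)`-minimizing (with `0<ε<1`, `ε<λ-1`,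
`λ(1-ε)>1`), then for `[u] ∈ S` and `φ ∈ Out(F_N)` with `‖φ(u)‖_A ≤ ‖u‖_A` we
have `φ([u]) ∈ S`.  The peak-reduction theorem (Lyndon–Schupp, Prop. 4.17) is
assumed as the hypothesis `hpeak`: whenever `‖φ(w)‖_A ≤ ‖w‖_A`, `φ([w])` is
reachable from `[w]` by a chain of Whitehead moves whose intermediate classes
all have length `≤ ‖w‖_A`. -/
theorem stmt1 {G C : Type*} [Group G] [MulAction G C] (W : Set G)
    (len : C → ℕ) (M : ℕ) (lam eps : ℝ)
    (hM : 1 ≤ M) (hlam : 1 < lam) (heps0 : 0 < eps) (heps1 : eps < 1)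
    (heps : eps < lam - 1) (hle : 1 < lam * (1 - eps))
    (hpeak : ∀ (w : C) (φ : G), len (φ • w) ≤ len w →
      ∃ (k : ℕ) (c : ℕ → C), c 0 = w ∧ c k = φ • w ∧
        (∀ i < k, ∃ τ ∈ W, τ • c i = c (i + 1)) ∧
        (∀ i ≤ k, len (c i) ≤ len w))
    (S : Finset C) (hS : IsWMinimizingSet W len M lam eps S)
    (u : C) (hu : u ∈ S) (φ : G) (hφ : len (φ • u) ≤ len u) :
    φ • u ∈ S :=
  stmt1_general W len M lam eps hlam hle hpeak S hS u hu φ hφ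
end

section
/- Let M ≥ 1 be an integer, λ > 1, 0 ≤ ε < λ−1, and let 0 < ε' < ε and λ' > λ satisfy λ'(1−ε') > λ. If a finite set S of conjugacy classes of nontrivial elements of F_N is (M,λ',ε',W_N)-minimizing, then S is (M,λ,ε)-minimizing. -/
/-!
The ratio condition only weakens when `ε'` grows to `ε`. For minimality, take `φ` with
`φ(u) ∉ S` and a peak-reduced chain of Whitehead moves from `u` to `φ(u)`. The first move
leaving `S` starts at a class of `S`, of length `≥ (1 - ε') ‖u‖`, so it ends at a class of
length `≥ λ' (1 - ε') ‖u‖ > λ ‖u‖ > ‖u‖`. Peak reduction bounds that length by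
`max ‖u‖ ‖φ(u)‖`, hence by `‖φ(u)‖`.
-/

/-- `(M,λ,ε)`-minimizing set (see the paper, Definition d:MLE), in the abstract
model where `G = Out(F_N)` acts on the set `C` of conjugacy classes and
`len = ‖·‖_A` is the cyclically reduced length. -/
def IsMinimizingSet (G : Type*) {C : Type*} [Group G] [MulAction G C]
    (len : C → ℕ) (M : ℕ) (lam eps : ℝ) (S : Finset C) : Prop :=
  (∀ u ∈ S, 0 < len u) ∧
  S.card ≤ M ∧
  (∀ u ∈ S, ∀ u' ∈ S, ∃ φ : G, φ • u = u') ∧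
  (∀ u ∈ S, ∀ u' ∈ S,
      (1 - eps) * (len u : ℝ) ≤ (len u' : ℝ) ∧ (len u' : ℝ) ≤ (1 + eps) * (len u : ℝ)) ∧
  (∀ u ∈ S, ∀ φ : G, φ • u ∉ S → lam * (len u : ℝ) ≤ (len (φ • u) : ℝ))

theorem Nat.exists_lt_and_not_succ_of_not {p : ℕ → Prop} {k : ℕ} (h0 : p 0) (hk : ¬p k) :
    ∃ j < k, p j ∧ ¬p (j + 1) := by
  induction k with
  | zero => exact absurd h0 hk
  | succ k ih =>
    by_cases hpk : p k
    · exact ⟨k, k.lt_succ_self, hpk, hk⟩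
    · obtain ⟨j, hjk, hj⟩ := ih hpk
      exact ⟨j, hjk.trans k.lt_succ_self, hj⟩

theorem ratio_bounds_mono {a b eps eps' : ℝ} (ha : 0 ≤ a) (heps : eps' ≤ eps)
    (h : (1 - eps') * a ≤ b ∧ b ≤ (1 + eps') * a) :
    (1 - eps) * a ≤ b ∧ b ≤ (1 + eps) * a :=
  ⟨by nlinarith [h.1], by nlinarith [h.2]⟩

section

variable {G C : Type*} [Group G] [MulAction G C] {W : Set G} {len : C → ℕ} {M : ℕ}
  {lam' eps' : ℝ} {S : Finset C}

theorem IsWMinimizingSet.exists_len_ge_of_chain (hS : IsWMinimizingSet W len M lam' eps' S)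
    (hlam' : 0 ≤ lam') {u : C} (hu : u ∈ S) {k : ℕ} {c : ℕ → C} (hc0 : c 0 = u)
    (hck : c k ∉ S) (hstep : ∀ i < k, ∃ τ ∈ W, τ • c i = c (i + 1)) :
    ∃ i ≤ k, lam' * (1 - eps') * (len u : ℝ) ≤ len (c i) := by
  obtain ⟨-, -, -, hratio, hmin⟩ := hS
  obtain ⟨j, hjk, hjS, hj1S⟩ :=
    Nat.exists_lt_and_not_succ_of_not (p := fun i ↦ c i ∈ S) (hc0 ▸ hu) hck
  obtain ⟨τ, hτW, hτ⟩ := hstep j hjk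
  have hexit : lam' * len (c j) ≤ len (c (j + 1)) := hτ ▸ hmin (c j) hjS τ hτW (hτ ▸ hj1S)
  refine ⟨j + 1, hjk, ?_⟩
  calc lam' * (1 - eps') * (len u : ℝ) = lam' * ((1 - eps') * len u) := mul_assoc _ _ _
    _ ≤ lam' * len (c j) := mul_le_mul_of_nonneg_left (hratio u hu (c j) hjS).1 hlam'
    _ ≤ len (c (j + 1)) := hexit

end

theorem stmt2_general {G C : Type*} [Group G] [MulAction G C] (W : Set G)
    (len : C → ℕ) (M : ℕ) (lam eps lam' eps' : ℝ)
    (hlam : 1 < lam)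
    (heps' : eps' < eps) (hlam' : lam < lam')
    (hkey : lam < lam' * (1 - eps'))
    (hpeak : ∀ (w : C) (φ : G),
      ∃ (k : ℕ) (c : ℕ → C), c 0 = w ∧ c k = φ • w ∧
        (∀ i < k, ∃ τ ∈ W, τ • c i = c (i + 1)) ∧
        (∀ i ≤ k, len (c i) ≤ max (len w) (len (φ • w))))
    (S : Finset C) (hS : IsWMinimizingSet W len M lam' eps' S) :
    IsMinimizingSet G len M lam eps S := by
  obtain ⟨hpos, hcard, htrans, hratio, -⟩ := id hS
  refine ⟨hpos, hcard, htrans,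
    fun u hu u' hu' ↦ ratio_bounds_mono (Nat.cast_nonneg _) heps'.le (hratio u hu u' hu'), ?_⟩
  intro u hu φ hφu
  obtain ⟨k, c, hc0, hck, hstep, hpeak⟩ := hpeak u φ
  obtain ⟨i, hik, hlong⟩ := hS.exists_len_ge_of_chain (by linarith) hu hc0 (hck ▸ hφu) hstep
  have hu_pos : (0 : ℝ) < len u := by exact_mod_cast hpos u hu
  have hu_lt : len u < len (c i) := by
    exact_mod_cast (show (len u : ℝ) < len (c i) by nlinarith)
  have hci_le : len (c i) ≤ len (φ • u) := (le_max_iff.mp (hpeak i hik)).resolve_left hu_lt.not_ge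
  calc lam * (len u : ℝ) ≤ lam' * (1 - eps') * len u := by gcongr
    _ ≤ len (c i) := hlong
    _ ≤ len (φ • u) := by exact_mod_cast hci_le

/-- with `0 < ε' < ε < λ - 1 < λ' - 1` and `λ'(1-ε') > λ`, every
`(M,λ',ε',W_N)`-minimizing set is `(M,λ,ε)`-minimizing.  Peak reduction is
assumed as the hypothesis `hpeak`: any `φ ∈ Out(F_N)` factors as a chain of
Whitehead moves with all intermediate classes of length
`≤ max(‖w‖_A, ‖φ(w)‖_A)`. -/
theorem stmt2 {G C : Type*} [Group G] [MulAction G C] (W : Set G)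
    (len : C → ℕ) (M : ℕ) (lam eps lam' eps' : ℝ)
    (hM : 1 ≤ M) (hlam : 1 < lam) (heps0 : 0 ≤ eps) (heps : eps < lam - 1)
    (heps'0 : 0 < eps') (heps' : eps' < eps) (hlam' : lam < lam')
    (hkey : lam < lam' * (1 - eps'))
    (hpeak : ∀ (w : C) (φ : G),
      ∃ (k : ℕ) (c : ℕ → C), c 0 = w ∧ c k = φ • w ∧
        (∀ i < k, ∃ τ ∈ W, τ • c i = c (i + 1)) ∧
        (∀ i ≤ k, len (c i) ≤ max (len w) (len (φ • w))))
    (S : Finset C) (hS : IsWMinimizingSet W len M lam' eps' S) :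
    IsMinimizingSet G len M lam eps S :=
  stmt2_general W len M lam eps lam' eps' hlam heps' hlam' hkey hpeak S hS
end

section
/- Let S be an (M,λ,ε)-minimizing set with λ > 1 and 0 ≤ ε < λ−1, and let [u] ∈ S. Then every Out(F_N)-minimal element of the orbit Out(F_N)[u] belongs to S; in particular the set M([u]) of Out(F_N)-minimal elements in the orbit has cardinality at most M. -/
/-- `[u]` is `Out(F_N)`-minimal if no element of `Out(F_N)` decreases its
(cyclically reduced) length. -/
def IsOutMinimal (G : Type*) {C : Type*} [Group G] [MulAction G C]
    (len : C → ℕ) (u : C) : Prop :=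
  ∀ φ : G, len u ≤ len (φ • u)

theorem IsOutMinimal.len_le_of_smul {G C : Type*} [Group G] [MulAction G C]
    {len : C → ℕ} {u : C} {φ : G} (hmin : IsOutMinimal G len (φ • u)) :
    len (φ • u) ≤ len u := by
  simpa using hmin φ⁻¹

/-- Outside `S` the orbit of `u` is at least `λ > 1` times longer than `u`, whereas a minimal
element of the orbit is no longer than `u`. -/
theorem IsMinimizingSet.smul_mem_of_isOutMinimal {G C : Type*} [Group G] [MulAction G C]
    {len : C → ℕ} {M : ℕ} {lam eps : ℝ} {S : Finset C}
    (hS : IsMinimizingSet G len M lam eps S) (hlam : 1 < lam) {u : C} (hu : u ∈ S) {φ : G}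
    (hmin : IsOutMinimal G len (φ • u)) : φ • u ∈ S := by
  by_contra hnotin
  have hgrow : lam * (len u : ℝ) ≤ len (φ • u) := hS.2.2.2.2 u hu φ hnotin
  have hle : (len (φ • u) : ℝ) ≤ len u := by exact_mod_cast hmin.len_le_of_smul
  have hpos : (0 : ℝ) < len u := by exact_mod_cast hS.1 u hu
  nlinarith

theorem stmt3_general {G C : Type*} [Group G] [MulAction G C]
    (len : C → ℕ) (M : ℕ) (lam eps : ℝ)
    (hlam : 1 < lam)
    (S : Finset C) (hS : IsMinimizingSet G len M lam eps S)
    (u : C) (hu : u ∈ S) :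
    {u' : C | (∃ φ : G, φ • u = u') ∧ IsOutMinimal G len u'} ⊆ (S : Set C) ∧
      Set.ncard {u' : C | (∃ φ : G, φ • u = u') ∧ IsOutMinimal G len u'} ≤ M := by
  have hsub : {u' : C | (∃ φ : G, φ • u = u') ∧ IsOutMinimal G len u'} ⊆ (S : Set C) := by
    rintro _ ⟨⟨φ, rfl⟩, hmin⟩
    exact hS.smul_mem_of_isOutMinimal hlam hu hmin
  refine ⟨hsub, ?_⟩
  calc Set.ncard {u' : C | (∃ φ : G, φ • u = u') ∧ IsOutMinimal G len u'}
      ≤ (S : Set C).ncard := Set.ncard_le_ncard hsub S.finite_toSet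
    _ = S.card := Set.ncard_coe_finset S
    _ ≤ M := hS.2.1

/-- if `S` is `(M,λ,ε)`-minimizing and `[u] ∈ S`, then every
`Out(F_N)`-minimal element of the orbit of `[u]` lies in `S`; in particular the
set `M([u])` of minimal elements of the orbit has at most `M` elements. -/
theorem stmt3 {G C : Type*} [Group G] [MulAction G C]
    (len : C → ℕ) (M : ℕ) (lam eps : ℝ)
    (hM : 1 ≤ M) (hlam : 1 < lam) (heps0 : 0 ≤ eps) (heps : eps < lam - 1)
    (S : Finset C) (hS : IsMinimizingSet G len M lam eps S)
    (u : C) (hu : u ∈ S) :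
    {u' : C | (∃ φ : G, φ • u = u') ∧ IsOutMinimal G len u'} ⊆ (S : Set C) ∧
      Set.ncard {u' : C | (∃ φ : G, φ • u = u') ∧ IsOutMinimal G len u'} ≤ M :=
  stmt3_general len M lam eps hlam S hS u hu
end

section
/- Let S be an (M,λ,ε)-minimizing set with λ > 1, 0 ≤ ε < λ−1, and let [u] ∈ S. If τ_1, …, τ_k ∈ W_N are Whitehead moves such that ‖u‖_A > ‖τ_1(u)‖_A > ‖τ_2τ_1(u)‖_A > … > ‖τ_k···τ_1(u)‖_A, then k ≤ M−1 and τ_i···τ_1([u]) ∈ S for i = 1, …, k. -/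
theorem Finset.add_one_le_card_of_strictAntiOn {α β : Type*} [Preorder β] {S : Finset α}
    {f : α → β} {c : ℕ → α} {k : ℕ} (hmem : ∀ i ≤ k, c i ∈ S)
    (hanti : StrictAntiOn (f ∘ c) (Set.Iic k)) : k + 1 ≤ S.card := by
  calc k + 1 = (Finset.Iic k).card := (Nat.card_Iic k).symm
    _ ≤ S.card := Finset.card_le_card_of_injOn c (fun i hi => hmem i (Finset.mem_Iic.mp hi))
        (by simpa only [Finset.coe_Iic] using hanti.injOn.of_comp)

namespace IsMinimizingSet

variable {G C : Type*} [Group G] [MulAction G C] {len : C → ℕ} {M : ℕ} {lam eps : ℝ}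
  {S : Finset C}

theorem smul_mem_of_len_lt (hS : IsMinimizingSet G len M lam eps S) (hlam : 1 ≤ lam)
    {u : C} (hu : u ∈ S) {φ : G} (hφ : len (φ • u) < len u) : φ • u ∈ S := by
  by_contra hφu
  have hpos : (0 : ℝ) < len u := by exact_mod_cast hS.1 u hu
  have hgrow : lam * (len u : ℝ) ≤ len (φ • u) := hS.2.2.2.2 u hu φ hφu
  have hshrink : (len (φ • u) : ℝ) < len u := by exact_mod_cast hφ
  nlinarith

theorem mem_of_len_decreasing_chain (hS : IsMinimizingSet G len M lam eps S)
    (hlam : 1 ≤ lam) {k : ℕ} {τ : ℕ → G} {c : ℕ → C} (hc0 : c 0 ∈ S)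
    (hstep : ∀ i < k, c (i + 1) = τ i • c i)
    (hdec : ∀ i < k, len (c (i + 1)) < len (c i)) : ∀ i ≤ k, c i ∈ S := by
  intro i hi
  induction i with
  | zero => exact hc0
  | succ i ih =>
    have hik : i < k := hi
    have hdec' := hdec i hik
    rw [hstep i hik] at hdec' ⊢
    exact hS.smul_mem_of_len_lt hlam (ih hik.le) hdec'

end IsMinimizingSet

theorem stmt4_general {G C : Type*} [Group G] [MulAction G C]
    (len : C → ℕ) (M : ℕ) (lam eps : ℝ)
    (hlam : 1 < lam)
    (S : Finset C) (hS : IsMinimizingSet G len M lam eps S)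
    (u : C) (hu : u ∈ S)
    (k : ℕ) (τ : ℕ → G)
    (c : ℕ → C) (hc0 : c 0 = u)
    (hstep : ∀ i < k, c (i + 1) = τ i • c i)
    (hdec : ∀ i < k, len (c (i + 1)) < len (c i)) :
    k ≤ M - 1 ∧ ∀ i, 1 ≤ i → i ≤ k → c i ∈ S := by
  have hmem : ∀ i ≤ k, c i ∈ S :=
    hS.mem_of_len_decreasing_chain hlam.le (hc0 ▸ hu) hstep hdec
  have hanti : StrictAntiOn (len ∘ c) (Set.Iic k) := strictAntiOn_Iic_of_succ_lt hdec
  have hcard : k + 1 ≤ S.card := Finset.add_one_le_card_of_strictAntiOn hmem hanti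
  have hcardM : S.card ≤ M := hS.2.1
  exact ⟨by omega, fun i _ hik => hmem i hik⟩

/-- if `S` is `(M,λ,ε)`-minimizing, `[u] ∈ S`, and
`τ_1,…,τ_k ∈ W_N` are Whitehead moves whose successive partial applications
`c i = τ_i⋯τ_1([u])` strictly decrease the length, then `k ≤ M - 1` and all
the classes `c 1, …, c k` lie in `S`. -/
theorem stmt4 {G C : Type*} [Group G] [MulAction G C] (W : Set G)
    (len : C → ℕ) (M : ℕ) (lam eps : ℝ)
    (hM : 1 ≤ M) (hlam : 1 < lam) (heps0 : 0 ≤ eps) (heps : eps < lam - 1)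
    (S : Finset C) (hS : IsMinimizingSet G len M lam eps S)
    (u : C) (hu : u ∈ S)
    (k : ℕ) (τ : ℕ → G) (hτ : ∀ i < k, τ i ∈ W)
    (c : ℕ → C) (hc0 : c 0 = u)
    (hstep : ∀ i < k, c (i + 1) = τ i • c i)
    (hdec : ∀ i < k, len (c (i + 1)) < len (c i)) :
    k ≤ M - 1 ∧ ∀ i, 1 ≤ i → i ≤ k → c i ∈ S :=
  stmt4_general len M lam eps hlam S hS u hu k τ c hc0 hstep hdec
end

section
/- Let M ≥ 1, λ > 1, 0 ≤ ε < λ−1. If a nontrivial element u ∈ F_N is such that the orbit Out(F_N)[u] contains some (M,λ,ε)-minimal conjugacy class, then every Out(F_N)-minimal element [u'] of the orbit Out(F_N)[u] is itself (M,λ,ε)-minimal. -/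
/-- A conjugacy class is `(M,λ,ε)`-minimal if it lies in some
`(M,λ,ε)`-minimizing set. -/
def IsMinimalClass (G : Type*) {C : Type*} [Group G] [MulAction G C]
    (len : C → ℕ) (M : ℕ) (lam eps : ℝ) (u : C) : Prop :=
  ∃ S : Finset C, IsMinimizingSet G len M lam eps S ∧ u ∈ S

theorem IsMinimizingSet.mem_of_isOutMinimal {G C : Type*} [Group G] [MulAction G C]
    {len : C → ℕ} {M : ℕ} {lam eps : ℝ} {S : Finset C}
    (hS : IsMinimizingSet G len M lam eps S) (hlam : 1 < lam)
    {v w : C} (hv : v ∈ S) (hvw : w ∈ MulAction.orbit G v) (hw : IsOutMinimal G len w) :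
    w ∈ S := by
  obtain ⟨φ, rfl⟩ := hvw
  obtain ⟨hposS, -, -, -, hjump⟩ := hS
  by_contra hφv
  have hgrow : lam * (len v : ℝ) ≤ len (φ • v) := hjump v hv φ hφv
  have hshrink : (len (φ • v) : ℝ) ≤ len v := by
    exact_mod_cast (by simpa using hw φ⁻¹ : len (φ • v) ≤ len v)
  have hvpos : (0 : ℝ) < len v := by exact_mod_cast hposS v hv
  nlinarith

theorem stmt5_general {G C : Type*} [Group G] [MulAction G C]
    (len : C → ℕ) (M : ℕ) (lam eps : ℝ)
    (hlam : 1 < lam)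
    (u : C)
    (h : ∃ v : C, (∃ φ : G, φ • u = v) ∧ IsMinimalClass G len M lam eps v) :
    ∀ u' : C, (∃ φ : G, φ • u = u') → IsOutMinimal G len u' →
      IsMinimalClass G len M lam eps u' := by
  rintro u' hu' hmin
  obtain ⟨v, hv, S, hS, hvS⟩ := h
  have hu'v : u' ∈ MulAction.orbit G v := by
    rwa [MulAction.orbit_eq_iff.mpr hv]
  exact ⟨S, hS, hS.mem_of_isOutMinimal hlam hvS hu'v hmin⟩

/-- if the orbit `Out(F_N)[u]` of a nontrivial class `[u]`
contains some `(M,λ,ε)`-minimal class, then every `Out(F_N)`-minimal element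
of that orbit is itself `(M,λ,ε)`-minimal. -/
theorem stmt5 {G C : Type*} [Group G] [MulAction G C]
    (len : C → ℕ) (M : ℕ) (lam eps : ℝ)
    (hM : 1 ≤ M) (hlam : 1 < lam) (heps0 : 0 ≤ eps) (heps : eps < lam - 1)
    (u : C) (hpos : 0 < len u)
    (h : ∃ v : C, (∃ φ : G, φ • u = v) ∧ IsMinimalClass G len M lam eps v) :
    ∀ u' : C, (∃ φ : G, φ • u = u') → IsOutMinimal G len u' →
      IsMinimalClass G len M lam eps u' :=
  stmt5_general len M lam eps hlam u h
end

section
/- Let S be a finite alphabet, let w ∈ S^n and let w' be a (contiguous) subword of w with |w| − |w'| ≤ d. Then for every word v of length k ≥ 1, the cyclic occurrence counts satisfy |⟨v,w⟩ − ⟨v,w'⟩| ≤ d + 2k. -/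
/-!
Cyclic occurrences of `v` in `w` differ from ordinary (non-wrapping) occurrences only at the
`|v|` starting positions whose window wraps around the end of `w`. Ordinary occurrences in `w'`
shift to ordinary occurrences in `p ++ w' ++ q`, and every ordinary occurrence in `p ++ w' ++ q`
either comes from `w'` or starts at one of `|p| + |q|` positions overlapping `p` or `q`.
-/

/-- Cyclic occurrence count: the number of indices `i ∈ {0,…,|w|-1}` such that
the word `v` occurs in the periodic extension `w^∞ = www⋯` starting at
position `i` (all positions read modulo `|w|`). -/
def cycCount {S : Type*} [DecidableEq S] (w v : List S) : ℕ :=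
  ((Finset.range w.length).filter fun i =>
    ∀ j ∈ Finset.range v.length, w[(i + j) % w.length]? = v[j]?).card

namespace List

variable {S : Type*}

theorem prefix_drop_iff_getElem? {w v : List S} {i : ℕ} :
    v <+: w.drop i ↔ ∀ j < v.length, w[i + j]? = v[j]? := by
  rw [prefix_iff_getElem?]
  simp only [getElem?_drop]
  exact forall₂_congr fun j hj => by rw [getElem?_eq_getElem hj]

variable [DecidableEq S]

def occurrences (w v : List S) : Finset ℕ :=
  (Finset.range w.length).filter fun i => v <+: w.drop i

theorem mem_occurrences {w v : List S} {i : ℕ} :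
    i ∈ occurrences w v ↔ i < w.length ∧ v <+: w.drop i := by
  simp [occurrences]

theorem add_length_le_of_mem_occurrences {w v : List S} {i : ℕ}
    (h : i ∈ occurrences w v) : i + v.length ≤ w.length := by
  obtain ⟨hiw, hpre⟩ := mem_occurrences.1 h
  have := hpre.length_le
  simp only [length_drop] at this
  omega

theorem card_occurrences_le_cycCount (w v : List S) :
    (occurrences w v).card ≤ cycCount w v := by
  refine Finset.card_le_card fun i hi => ?_
  have hlen := add_length_le_of_mem_occurrences hi
  obtain ⟨hiw, hpre⟩ := mem_occurrences.1 hi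
  simp only [Finset.mem_filter, Finset.mem_range]
  refine ⟨hiw, fun j hj => ?_⟩
  rw [Nat.mod_eq_of_lt (by omega)]
  exact prefix_drop_iff_getElem?.1 hpre j hj

/-- Only the last `|v|` starting positions can carry a cyclic occurrence that wraps around. -/
theorem cycCount_le_card_occurrences_add (w v : List S) :
    cycCount w v ≤ (occurrences w v).card + v.length := by
  have hsub : ((Finset.range w.length).filter fun i =>
      ∀ j ∈ Finset.range v.length, w[(i + j) % w.length]? = v[j]?) ⊆
      occurrences w v ∪ Finset.Ico (w.length - v.length) w.length := by
    intro i hi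
    simp only [Finset.mem_filter, Finset.mem_range] at hi
    obtain ⟨hiw, hmatch⟩ := hi
    rw [Finset.mem_union, Finset.mem_Ico, mem_occurrences, prefix_drop_iff_getElem?]
    by_cases h : i + v.length ≤ w.length
    · refine Or.inl ⟨hiw, fun j hj => ?_⟩
      rw [← hmatch j hj, Nat.mod_eq_of_lt (by omega)]
    · exact Or.inr ⟨by omega, hiw⟩
  calc cycCount w v ≤ (occurrences w v ∪ Finset.Ico (w.length - v.length) w.length).card :=
        Finset.card_le_card hsub
    _ ≤ (occurrences w v).card + (Finset.Ico (w.length - v.length) w.length).card :=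
        Finset.card_union_le _ _
    _ ≤ (occurrences w v).card + v.length := by rw [Nat.card_Ico]; omega

theorem add_mem_occurrences_append_left {p w v : List S} {i : ℕ} :
    p.length + i ∈ occurrences (p ++ w) v ↔ i ∈ occurrences w v := by
  simp [mem_occurrences, drop_append, drop_eq_nil_of_le]

theorem occurrences_subset_append_right (w q v : List S) :
    occurrences w v ⊆ occurrences (w ++ q) v := by
  intro i hi
  obtain ⟨hiw, hpre⟩ := mem_occurrences.1 hi
  rw [mem_occurrences, length_append, drop_append_of_le_length hiw.le]
  exact ⟨by omega, hpre.trans (prefix_append _ _)⟩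

theorem card_occurrences_le_append (p w q v : List S) :
    (occurrences w v).card ≤ (occurrences (p ++ w ++ q) v).card :=
  calc (occurrences w v).card ≤ (occurrences (p ++ w) v).card :=
        Finset.card_le_card_of_injOn (p.length + ·)
          (fun _ hi => add_mem_occurrences_append_left.2 hi)
          (fun _ _ _ _ h => Nat.add_left_cancel h)
    _ ≤ (occurrences (p ++ w ++ q) v).card :=
        Finset.card_le_card (occurrences_subset_append_right _ _ _)

theorem card_occurrences_append_left_le (p w v : List S) :
    (occurrences (p ++ w) v).card ≤ (occurrences w v).card + p.length := by
  have hsub : occurrences (p ++ w) v ⊆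
      (occurrences w v).image (p.length + ·) ∪ Finset.range p.length := by
    intro i hi
    rw [Finset.mem_union, Finset.mem_image, Finset.mem_range]
    by_cases h : i < p.length
    · exact Or.inr h
    · obtain ⟨m, rfl⟩ := Nat.exists_eq_add_of_le (not_lt.1 h)
      exact Or.inl ⟨m, add_mem_occurrences_append_left.1 hi, rfl⟩
  calc (occurrences (p ++ w) v).card
      ≤ ((occurrences w v).image (p.length + ·) ∪ Finset.range p.length).card :=
        Finset.card_le_card hsub
    _ ≤ ((occurrences w v).image (p.length + ·)).card + (Finset.range p.length).card :=
        Finset.card_union_le _ _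
    _ ≤ (occurrences w v).card + p.length := by
        rw [Finset.card_range]
        exact Nat.add_le_add_right Finset.card_image_le _

theorem card_occurrences_append_right_le {w q v : List S} (hv : v ≠ []) :
    (occurrences (w ++ q) v).card ≤ (occurrences w v).card + q.length := by
  have hvlen : 0 < v.length := length_pos_iff.2 hv
  have hsub : occurrences (w ++ q) v ⊆ occurrences w v ∪
      Finset.Ico (w.length + 1 - v.length) (w.length + q.length + 1 - v.length) := by
    intro i hi
    have hlen := add_length_le_of_mem_occurrences hi
    rw [length_append] at hlen
    rw [Finset.mem_union, Finset.mem_Ico]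
    by_cases h : i + v.length ≤ w.length
    · refine Or.inl (mem_occurrences.2 ⟨by omega, ?_⟩)
      have hpre := (mem_occurrences.1 hi).2
      rw [drop_append_of_le_length (by omega)] at hpre
      exact prefix_of_prefix_length_le hpre (prefix_append _ _) (by rw [length_drop]; omega)
    · exact Or.inr ⟨by omega, by omega⟩
  calc (occurrences (w ++ q) v).card
      ≤ (occurrences w v ∪
          Finset.Ico (w.length + 1 - v.length) (w.length + q.length + 1 - v.length)).card :=
        Finset.card_le_card hsub
    _ ≤ (occurrences w v).card +
          (Finset.Ico (w.length + 1 - v.length) (w.length + q.length + 1 - v.length)).card :=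
        Finset.card_union_le _ _
    _ ≤ (occurrences w v).card + q.length := by rw [Nat.card_Ico]; omega

theorem card_occurrences_append_le {p w q v : List S} (hv : v ≠ []) :
    (occurrences (p ++ w ++ q) v).card ≤ (occurrences w v).card + p.length + q.length := by
  have := card_occurrences_append_right_le (w := p ++ w) (q := q) hv
  have := card_occurrences_append_left_le p w v
  omega

end List

theorem stmt14_general {S : Type*} [DecidableEq S]
    (w w' p q : List S) (d k : ℕ)
    (hsub : w = p ++ w' ++ q) (hd : p.length + q.length ≤ d)
    (v : List S) (hk : v.length = k) (hk1 : 1 ≤ k) :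
    |(cycCount w v : ℤ) - (cycCount w' v : ℤ)| ≤ (d : ℤ) + 2 * k := by
  subst hsub hk
  have hv : v ≠ [] := List.ne_nil_of_length_pos hk1
  have hgrow : cycCount (p ++ w' ++ q) v ≤ cycCount w' v + d + v.length :=
    calc cycCount (p ++ w' ++ q) v
        ≤ (List.occurrences (p ++ w' ++ q) v).card + v.length :=
          List.cycCount_le_card_occurrences_add _ _
      _ ≤ (List.occurrences w' v).card + p.length + q.length + v.length :=
          Nat.add_le_add_right (List.card_occurrences_append_le hv) _
      _ ≤ cycCount w' v + d + v.length := by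
          have := List.card_occurrences_le_cycCount w' v
          omega
  have hshrink : cycCount w' v ≤ cycCount (p ++ w' ++ q) v + v.length :=
    calc cycCount w' v ≤ (List.occurrences w' v).card + v.length :=
          List.cycCount_le_card_occurrences_add _ _
      _ ≤ (List.occurrences (p ++ w' ++ q) v).card + v.length :=
          Nat.add_le_add_right (List.card_occurrences_le_append _ _ _ _) _
      _ ≤ cycCount (p ++ w' ++ q) v + v.length :=
          Nat.add_le_add_right (List.card_occurrences_le_cycCount _ _) _
  rw [abs_sub_le_iff]
  constructor <;> omega

/-- if `w' ` is a contiguous subword of `w` (i.e. `w = p·w'·q`)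
with `|p| + |q| ≤ d`, then for every word `v` of length `k ≥ 1` the cyclic
occurrence counts satisfy `|⟨v,w⟩ − ⟨v,w'⟩| ≤ d + 2k`. -/
theorem stmt14 {S : Type*} [Fintype S] [DecidableEq S]
    (w w' p q : List S) (d k : ℕ)
    (hsub : w = p ++ w' ++ q) (hd : p.length + q.length ≤ d)
    (v : List S) (hk : v.length = k) (hk1 : 1 ≤ k) :
    |(cycCount w v : ℤ) - (cycCount w' v : ℤ)| ≤ (d : ℤ) + 2 * k :=
  stmt14_general w w' p q d k hsub hd v hk hk1
end

section
/- Let F_2 = F(a,b) and let τ be the Whitehead automorphism with τ(a) = ab^{-1}, τ(b) = b. Let w be a cyclically reduced positive word in {a,b} of length n ≥ 1 (every letter is a or b), and let ⟨v,w⟩ denote the cyclic number of occurrences of the word v in w. Then the cyclically reduced length of τ(w) equals ‖τ(w)‖_A = n + ⟨aa,w⟩ − ⟨ab,w⟩. -/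
/-- Cyclically reduced length of an element of the free group: the minimum of
the word lengths of its conjugates. -/
noncomputable def cycNorm {α : Type*} [DecidableEq α] (g : FreeGroup α) : ℕ :=
  sInf (Set.range fun x : FreeGroup α => FreeGroup.norm (x * g * x⁻¹))

/-!
Write `x₀ x₁ ⋯` for the periodic extension of the letters of `w`. The letter `xᵢ` followed by
`xᵢ₊₁` contributes to the reduced form of `τ(w)` the chunk `ab⁻¹`, `a`, `1`, `b` according as
`xᵢxᵢ₊₁` is `aa`, `ab`, `ba`, `bb`: the `b⁻¹` of an `a` is cancelled exactly when a `b` follows.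
Concretely, with `ε(a) = 1` and `ε(b) = b`, the chunk of `xy` equals `ε(x)⁻¹ τ(x) ε(y)`, so the
product of the chunks telescopes to a conjugate of `τ(w)`. In the word of chunks every `b⁻¹` is
flanked by `a`'s, so it is cyclically reduced, and its length `2⟨aa,w⟩ + ⟨ab,w⟩ + ⟨bb,w⟩` equals
`n + ⟨aa,w⟩ - ⟨ab,w⟩` because `⟨ab,w⟩ = ⟨ba,w⟩`.

That a cyclically reduced word `R` realises the minimum in `cycNorm` follows from a power trick:
`‖x (mk R)^k x⁻¹‖ ≥ k ‖R‖ - 2 ‖x‖` for every `k`, while `‖g^k‖ ≤ k ‖g‖`.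
-/

namespace FreeGroup

variable {α : Type*}

theorem isCyclicallyReduced_of_isReduced_append_self {L : List (α × Bool)}
    (h : IsReduced (L ++ L)) : IsCyclicallyReduced L := by
  rw [IsReduced, List.isChain_append] at h
  exact ⟨h.1, h.2.2⟩

variable [DecidableEq α]

theorem norm_pow_le (g : FreeGroup α) (k : ℕ) : norm (g ^ k) ≤ k * norm g := by
  induction k with
  | zero => simp
  | succ k ih => rw [pow_succ, add_mul, one_mul]; exact (norm_mul_le _ _).trans (by omega)

theorem IsReduced.norm_mk {L : List (α × Bool)} (h : IsReduced L) : norm (mk L) = L.length := by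
  rw [norm, toWord_mk, h.reduce_eq]

theorem IsCyclicallyReduced.norm_mk_pow {L : List (α × Bool)} (h : IsCyclicallyReduced L)
    (k : ℕ) : norm (mk L ^ k) = k * L.length := by
  rw [pow_mk, (h.flatten_replicate k).isReduced.norm_mk, List.length_flatten, List.map_replicate,
    List.sum_replicate, smul_eq_mul]

theorem IsCyclicallyReduced.length_le_norm_conj {R : List (α × Bool)}
    (h : IsCyclicallyReduced R) (x : FreeGroup α) : R.length ≤ norm (x * mk R * x⁻¹) := by
  set k := 2 * norm x + 1
  have key : k * R.length ≤ 2 * norm x + k * norm (x * mk R * x⁻¹) :=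
    calc k * R.length = norm (x⁻¹ * (x * mk R * x⁻¹) ^ k * x) := by
          rw [← h.norm_mk_pow k, conj_pow]; group
      _ ≤ norm x⁻¹ + norm ((x * mk R * x⁻¹) ^ k) + norm x :=
          (norm_mul_le _ _).trans (by gcongr; exact norm_mul_le _ _)
      _ ≤ 2 * norm x + k * norm (x * mk R * x⁻¹) := by
          rw [norm_inv_eq]; have := norm_pow_le (x * mk R * x⁻¹) k; omega
  by_contra! hlt
  have := Nat.mul_le_mul_left k (Nat.succ_le_of_lt hlt)
  rw [Nat.mul_succ] at this
  omega

end FreeGroup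

open FreeGroup

section CycNorm

variable {α : Type*} [DecidableEq α]

theorem cycNorm_conj (z g : FreeGroup α) : cycNorm (z * g * z⁻¹) = cycNorm g := by
  unfold cycNorm
  congr 1
  ext m
  constructor
  · rintro ⟨x, rfl⟩
    exact ⟨x * z, by group⟩
  · rintro ⟨x, rfl⟩
    exact ⟨x * z⁻¹, by group⟩

theorem FreeGroup.IsCyclicallyReduced.cycNorm_mk {R : List (α × Bool)}
    (h : IsCyclicallyReduced R) : cycNorm (mk R) = R.length :=
  le_antisymm (Nat.sInf_le ⟨1, by simp [h.isReduced.norm_mk]⟩)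
    (le_csInf ⟨_, 1, rfl⟩ (by rintro _ ⟨x, rfl⟩; exact h.length_le_norm_conj x))

end CycNorm

open Fin.NatCast

theorem cycCount_ofFn_pair {S : Type*} [DecidableEq S] {n : ℕ} [NeZero n] (c : Fin n → S)
    (u v : S) :
    cycCount (List.ofFn c) [u, v] =
      ((Finset.range n).filter fun i : ℕ => c i = u ∧ c ↑(i + 1) = v).card := by
  have hget (k : ℕ) : (List.ofFn c)[k % n]? = some (c k) := by
    rw [List.getElem?_eq_getElem (by simpa using Nat.mod_lt _ (NeZero.pos n)), List.getElem_ofFn]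
    exact congrArg (some ∘ c) (Fin.ext (Fin.val_natCast k n).symm)
  simp only [cycCount, List.length_ofFn, List.length_cons, List.length_nil, hget]
  congr 1
  ext i
  simp [Finset.mem_range, Nat.le_one_iff_eq_zero_or_eq_one]

theorem ofFn_eq_map_range {S : Type*} {n : ℕ} [NeZero n] (c : Fin n → S) :
    List.ofFn c = (List.range n).map fun i : ℕ => c i := by
  refine List.ext_getElem (by simp) fun i h _ => ?_
  simp only [List.getElem_ofFn, List.getElem_map, List.getElem_range]
  congr
  exact (Nat.mod_eq_of_lt (by simpa using h)).symm

namespace Whitehead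

noncomputable def tau : FreeGroup (Fin 2) →* FreeGroup (Fin 2) :=
  FreeGroup.lift fun i => if i = 0 then of 0 * (of 1)⁻¹ else of 1

def tauChunk : Fin 2 → Fin 2 → List (Fin 2 × Bool)
  | 0, 0 => [(0, true), (1, false)]
  | 0, 1 => [(0, true)]
  | 1, 0 => []
  | 1, 1 => [(1, true)]

noncomputable def tauConj (x : Fin 2) : FreeGroup (Fin 2) := if x = 0 then 1 else of 1

theorem mk_tauChunk (x y : Fin 2) :
    mk (tauChunk x y) = (tauConj x)⁻¹ * tau (of x) * tauConj y := by
  fin_cases x <;> fin_cases y <;>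
    simp [tauChunk, tauConj, tau, of, one_eq_mk, inv_mk, invRev, mul_mk] <;>
    exact reduce.exact (by decide)

theorem length_tauChunk (x y : Fin 2) :
    ((tauChunk x y).length : ℤ) =
      1 + (if x = 0 ∧ y = 0 then 1 else 0) - (if x = 0 ∧ y = 1 then 1 else 0)
        + (if x = 0 then 1 else 0) - (if y = 0 then 1 else 0) := by
  fin_cases x <;> fin_cases y <;> simp [tauChunk]

def tauWord (x : ℕ → Fin 2) (m : ℕ) : List (Fin 2 × Bool) :=
  (List.range m).flatMap fun i => tauChunk (x i) (x (i + 1))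

variable (x : ℕ → Fin 2)

theorem tauWord_succ (m : ℕ) :
    tauWord x (m + 1) = tauWord x m ++ tauChunk (x m) (x (m + 1)) := by
  simp [tauWord, List.range_succ]

theorem tauWord_add (m k : ℕ) :
    tauWord x (m + k) = tauWord x m ++ tauWord (fun i => x (m + i)) k := by
  simp [tauWord, List.range_add, List.flatMap_map, add_assoc]

theorem mk_tauWord (m : ℕ) :
    mk (tauWord x m) =
      (tauConj (x 0))⁻¹ * ((List.range m).map fun i => tau (of (x i))).prod * tauConj (x m) := by
  induction m with
  | zero => simp [tauWord, ← one_eq_mk]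
  | succ m ih =>
    rw [tauWord_succ, ← mul_mk, ih, mk_tauChunk, List.range_succ, List.map_append,
      List.prod_append]
    simp only [List.map_cons, List.map_nil, List.prod_cons, List.prod_nil, mul_one]
    group

/-- Only a `b⁻¹` could cancel, and a final `b⁻¹` is always followed by a chunk starting with `a`. -/
theorem isReduced_tauWord (m : ℕ) :
    FreeGroup.IsReduced (tauWord x m) ∧
      ∀ p ∈ (tauWord x m).getLast?, p.2 = false → p = (1, false) ∧ x m = 0 := by
  induction m with
  | zero => simp [tauWord]
  | succ m ih =>
    obtain ⟨hred, hlast⟩ := ih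
    rw [tauWord_succ, FreeGroup.IsReduced, List.isChain_append]
    generalize x m = u at hlast
    generalize x (m + 1) = v
    fin_cases u <;> fin_cases v <;> simp_all [tauChunk, FreeGroup.IsReduced]

theorem isCyclicallyReduced_tauWord {n : ℕ} (hx : ∀ i, x (n + i) = x i) :
    IsCyclicallyReduced (tauWord x n) := by
  apply isCyclicallyReduced_of_isReduced_append_self
  have hdouble := tauWord_add x n n
  rw [show (fun i => x (n + i)) = x from funext hx] at hdouble
  exact hdouble ▸ (isReduced_tauWord x _).1

theorem length_tauWord_eq_sum (m : ℕ) :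
    (tauWord x m).length = ∑ i ∈ Finset.range m, (tauChunk (x i) (x (i + 1))).length := by
  induction m with
  | zero => simp [tauWord]
  | succ m ih => rw [tauWord_succ, List.length_append, ih, Finset.sum_range_succ]

theorem length_tauWord_eq_count {n : ℕ} (hx : x n = x 0) :
    ((tauWord x n).length : ℤ) =
      n + ((Finset.range n).filter fun i => x i = 0 ∧ x (i + 1) = 0).card
        - ((Finset.range n).filter fun i => x i = 0 ∧ x (i + 1) = 1).card := by
  have htel := Finset.sum_range_sub (fun i => if x i = 0 then (1 : ℤ) else 0) n
  rw [hx, sub_self] at htel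
  rw [length_tauWord_eq_sum, Nat.cast_sum, Finset.natCast_card_filter, Finset.natCast_card_filter]
  simp only [length_tauChunk, Finset.sum_add_distrib, Finset.sum_sub_distrib] at htel ⊢
  simp only [Finset.sum_const, Finset.card_range, nsmul_eq_mul, mul_one] at htel ⊢
  linarith

end Whitehead

open Whitehead

/-- in `F₂ = F(a,b)` (generators `a = of 0`, `b = of 1`), let
`τ` be the Whitehead automorphism `a ↦ ab⁻¹`, `b ↦ b`, and let
`w = x₁⋯x_n` (`n ≥ 1`) be a positive word, given by letters `c : Fin n → Fin 2`
(hence cyclically reduced).  Then the cyclically reduced length of `τ(w)` is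
`‖τ(w)‖ = n + ⟨aa,w⟩ − ⟨ab,w⟩`, where `⟨v,w⟩` is the cyclic number of
occurrences of `v` in the letter sequence of `w`. -/
theorem stmt17 (n : ℕ) (hn : 1 ≤ n) (c : Fin n → Fin 2)
    (τ : FreeGroup (Fin 2) →* FreeGroup (Fin 2))
    (hτ : τ = FreeGroup.lift fun i : Fin 2 =>
      if i = 0 then FreeGroup.of (0 : Fin 2) * (FreeGroup.of (1 : Fin 2))⁻¹
      else FreeGroup.of (1 : Fin 2))
    (w : FreeGroup (Fin 2))
    (hw : w = ((List.ofFn c).map FreeGroup.of).prod) :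
    (cycNorm (τ w) : ℤ) =
      (n : ℤ) + (cycCount (List.ofFn c) [(0 : Fin 2), 0] : ℤ)
        - (cycCount (List.ofFn c) [(0 : Fin 2), 1] : ℤ) := by
  have : NeZero n := ⟨by omega⟩
  set x : ℕ → Fin 2 := fun i => c i
  have hper (i : ℕ) : x (n + i) = x i := by simp [x]
  have hper₀ : x n = x 0 := by simpa using hper 0
  have hprod : τ w = ((List.range n).map fun i => tau (of (x i))).prod := by
    rw [hτ, hw, map_list_prod, ofFn_eq_map_range, List.map_map, List.map_map]
    rfl
  have hconj : τ w = tauConj (x 0) * mk (tauWord x n) * (tauConj (x 0))⁻¹ := by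
    rw [mk_tauWord, hper₀, hprod]
    group
  rw [hconj, cycNorm_conj, (isCyclicallyReduced_tauWord x hper).cycNorm_mk,
    length_tauWord_eq_count x hper₀, cycCount_ofFn_pair, cycCount_ofFn_pair]
end
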